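/- arXiv:0903.0128 — 6 statements merged into one kernel-verified Lean document; each statement's English description precedes it below -/
import Mathlib

section
/- Let k and n be positive integers and let a_0, a_1, ..., a_{n-1} be real (or complex) numbers. Then the characteristic polynomial of the k-circulant matrix A_{k,n} satisfies χ(A_{k,n})(λ) = λ^{n−n'} · ∏_{j=0}^{ℓ−1} (λ^{n_j} − Π_j), where P_0, P_1, ..., P_{ℓ−1} is the eigenvalue partition of Z_{n'}, n_j = #P_j, and Π_j = ∏_{t ∈ P_j} λ_{t n/n'}. -/
/-!
The DFT matrix `F = (ω^{ij})` conjugates `A_{k,n}` into the matrix `B` sending `e_t` to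
`λ_t e_{kt}`: a weighted adjacency matrix of the functional graph of `t ↦ k t` on `Z_n`.
The subgroup `(n/n') Z_n ≅ Z_{n'}` is invariant under this map, and every `t` falls into it
after `n/n'` steps because `n/n'` divides `k^{n/n'}`. Hence `B` is block triangular with a
nilpotent block of size `n - n'`, which contributes `λ^{n-n'}`. On `Z_{n'}` multiplication
by `k` is a permutation, so the remaining block is block diagonal along its cycles `P_j`, and
a weighted cycle of length `d` has characteristic polynomial `λ^d - ∏ (weights)`.
-/

open Polynomial

/-- The `k`-circulant matrix `A_{k,n}(a)`: rows and columns indexed by `Z_n`, with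
`(i,j)` entry `a_{(j − i k) mod n}`. Its `0`-th row is `(a_0, …, a_{n−1})` and each
row is the right-circular shift of the previous one by `k` positions. -/
def kCirculant (n k : ℕ) (a : ZMod n → ℂ) : Matrix (ZMod n) (ZMod n) ℂ :=
  fun i j => a (j - (k : ZMod n) * i)

/-- The orbit `S(x) = {x k^b mod n' : b ≥ 0}` of `x ∈ Z_{n'}` under multiplication
by `k`, as a `Finset` of `ZMod n'`. -/
noncomputable def orbitS (n' k : ℕ) [NeZero n'] (x : ZMod n') : Finset (ZMod n') :=
  (Set.toFinite {y : ZMod n' | ∃ b : ℕ, y = x * (k : ZMod n') ^ b}).toFinset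

/-- `λ_j = Σ_{l=0}^{n−1} a_l ω^{j l}` where `ω = exp(2πi/n)`. -/
noncomputable def dftEig (n : ℕ) (a : ZMod n → ℂ) (j : ℕ) : ℂ :=
  ∑ l ∈ Finset.range n, a (l : ZMod n) *
    Complex.exp (2 * Real.pi * Complex.I * (j : ℂ) * (l : ℂ) / (n : ℂ))

open Matrix Finset Function

section FunMatrix

variable {R ι κ : Type*} [CommRing R] [DecidableEq ι] [DecidableEq κ]

def funMatrix (f : ι → ι) (w : ι → R) : Matrix ι ι R :=
  of fun s t => if s = f t then w t else 0

lemma funMatrix_apply (f : ι → ι) (w : ι → R) (s t : ι) :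
    funMatrix f w s t = if s = f t then w t else 0 := rfl

lemma submatrix_funMatrix {f : ι → ι} {g : κ → κ} {e : κ → ι} (he : Injective e)
    (hfg : ∀ x, f (e x) = e (g x)) (w : ι → R) :
    (funMatrix f w).submatrix e e = funMatrix g (w ∘ e) := by
  ext s t
  simp only [submatrix_apply, funMatrix_apply, hfg, he.eq_iff, Function.comp_apply]

lemma eq_iterate_of_submatrix_funMatrix_pow_ne_zero [Fintype κ] (f : ι → ι) (w : ι → R)
    (e : κ → ι) {j : ℕ} {s t : κ} (h : ((funMatrix f w).submatrix e e ^ j) s t ≠ 0) :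
    e s = f^[j] (e t) := by
  induction j generalizing t with
  | zero =>
    rw [pow_zero] at h
    by_cases hst : s = t
    · rw [hst, iterate_zero_apply]
    · exact absurd (one_apply_ne hst) h
  | succ j ih =>
    rw [pow_succ, mul_apply] at h
    obtain ⟨r, -, hr⟩ := exists_ne_zero_of_sum_ne_zero h
    have hrt : e r = f (e t) := by
      by_contra hrt
      exact right_ne_zero_of_mul hr (if_neg hrt)
    rw [ih (left_ne_zero_of_mul hr), hrt, iterate_succ_apply]

end FunMatrix

section Blocks

variable {R ι : Type*} [CommRing R] [Fintype ι] [DecidableEq ι]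

lemma charmatrix_toSquareBlockProp (M : Matrix ι ι R) (p : ι → Prop) [DecidablePred p] :
    (M.toSquareBlockProp p).charmatrix = M.charmatrix.toSquareBlockProp p := by
  ext i j : 1
  simp [charmatrix_apply, toSquareBlockProp_def, diagonal_apply, Subtype.ext_iff]

lemma charpoly_eq_mul_of_twoBlockTriangular (M : Matrix ι ι R) (p : ι → Prop) [DecidablePred p]
    (h : ∀ i, ¬p i → ∀ j, p j → M i j = 0) :
    M.charpoly =
      (M.toSquareBlockProp p).charpoly * (M.toSquareBlockProp fun i => ¬p i).charpoly := by
  rw [charpoly, charpoly, charpoly, charmatrix_toSquareBlockProp, charmatrix_toSquareBlockProp]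
  refine M.charmatrix.twoBlockTriangular_det p fun i hi j hj => ?_
  rw [charmatrix_apply_ne _ _ _ fun hij => hi (by rwa [hij]), h i hi j hj, map_zero, neg_zero]

lemma charpoly_eq_prod_of_blockDiagonal {α : Type*} [DecidableEq α] (M : Matrix ι ι R)
    (b : ι → α) (h : ∀ i j, b i ≠ b j → M i j = 0) :
    M.charpoly = ∏ a ∈ univ.image b, (M.toSquareBlock b a).charpoly := by
  -- any linear order on the labels makes a block-diagonal matrix block triangular
  let _ : LinearOrder α := WellOrderingRel.isWellOrder.linearOrder
  convert (show M.BlockTriangular b from fun i j hij => h i j hij.ne').charpoly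

end Blocks

section FunMatrixCharpoly

variable {R ι κ : Type*} [CommRing R] [Fintype ι] [DecidableEq ι] [Fintype κ] [DecidableEq κ]

theorem charpoly_funMatrix_of_iterate_mem_range [IsReduced R] {f : ι → ι} {g : κ → κ}
    {e : κ → ι} (he : Injective e) (hfg : ∀ x, f (e x) = e (g x)) {N : ℕ}
    (hN : ∀ x, f^[N] x ∈ Set.range e) (w : ι → R) :
    (funMatrix f w).charpoly =
      X ^ (Fintype.card ι - Fintype.card κ) * (funMatrix g (w ∘ e)).charpoly := by
  classical
  rw [charpoly_eq_mul_of_twoBlockTriangular _ (· ∈ Set.range e), mul_comm]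
  · congr 1
    · have hnil : IsNilpotent ((funMatrix f w).toSquareBlockProp fun i => i ∉ Set.range e) := by
        refine ⟨N, ?_⟩
        ext s t
        by_contra hst
        exact s.2 (eq_iterate_of_submatrix_funMatrix_pow_ne_zero f w Subtype.val hst ▸ hN t)
      have hX := Polynomial.isNilpotent_iff.mp (isNilpotent_charpoly_sub_pow_of_isNilpotent hnil)
      rw [sub_eq_zero.mp (Polynomial.ext fun i => (hX i).eq_zero),
        Fintype.card_subtype_compl, Set.card_range_of_injective he]
    · have h := charpoly_reindex (Equiv.ofInjective e he).symm
        ((funMatrix f w).toSquareBlockProp fun x => x ∈ Set.range e)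
      rw [show reindex _ _ _ = funMatrix g (w ∘ e) from submatrix_funMatrix he hfg w] at h
      convert h.symm
  · rintro i hi _ ⟨y, rfl⟩
    rw [funMatrix_apply, hfg, if_neg fun h => hi ⟨_, h.symm⟩]

end FunMatrixCharpoly

namespace Equiv.Perm

lemma eq_one_or_eq_addRight_one {d : ℕ} [NeZero d] {σ : Perm (ZMod d)}
    (h : ∀ i, σ i = i ∨ σ i = i + 1) : σ = 1 ∨ σ = Equiv.addRight 1 := by
  set S := univ.filter fun i => σ i = i + 1
  -- the displacements `σ i - i ∈ {0, 1}` sum to zero, so `d ∣ #S`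
  have hS : ((#S : ℕ) : ZMod d) = 0 := by
    calc ((#S : ℕ) : ZMod d) = ∑ i, (σ i - i) := by
          rw [← sum_boole]
          refine sum_congr rfl fun i _ => ?_
          rcases h i with hi | hi <;> split_ifs <;> grind
      _ = 0 := by rw [sum_sub_distrib, sub_eq_zero]; exact Equiv.sum_comp σ id
  obtain ⟨c, hc⟩ := (ZMod.natCast_eq_zero_iff _ _).mp hS
  have hle : #S ≤ d := card_le_univ S |>.trans_eq (ZMod.card d)
  have hd := Nat.pos_of_ne_zero (NeZero.ne d)
  rcases c with _ | _ | c
  · left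
    ext i
    have : i ∉ S := by simp_all
    simp only [S, mem_filter, mem_univ, true_and] at this
    simpa [this] using h i
  · right
    ext i
    have : i ∈ S := by
      rw [eq_univ_of_card S (by simp [hc])]; exact mem_univ i
    simpa [S] using this
  · nlinarith

variable {ι : Type*} (σ : Perm ι)

lemma sameCycle_iff_mem_orbit_zpowers {x y : ι} :
    σ.SameCycle x y ↔ y ∈ MulAction.orbit (Subgroup.zpowers σ) x := by
  constructor
  · rintro ⟨i, rfl⟩
    exact ⟨⟨σ ^ i, Subgroup.zpow_mem_zpowers σ i⟩, rfl⟩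
  · rintro ⟨⟨_, i, rfl⟩, rfl⟩
    exact ⟨i, rfl⟩

variable [Fintype ι] [DecidableEq ι]

def sameCycleFinset (x : ι) : Finset ι := univ.filter (σ.SameCycle x)

lemma mem_sameCycleFinset {x y : ι} : y ∈ σ.sameCycleFinset x ↔ σ.SameCycle x y := by
  simp [sameCycleFinset]

lemma sameCycleFinset_eq_iff {x y : ι} :
    σ.sameCycleFinset y = σ.sameCycleFinset x ↔ σ.SameCycle x y := by
  refine ⟨fun h => σ.mem_sameCycleFinset.mp (h ▸ σ.mem_sameCycleFinset.mpr .rfl),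
    fun h => ?_⟩
  ext z
  simp only [mem_sameCycleFinset]
  exact ⟨h.trans, h.symm.trans⟩

end Equiv.Perm

section PermutationMatrices

variable {R ι : Type*} [CommRing R] [Fintype ι] [DecidableEq ι]

theorem charpoly_funMatrix_add_one {d : ℕ} [NeZero d] (v : ZMod d → R) :
    (funMatrix (· + 1) v).charpoly = X ^ d - C (∏ i, v i) := by
  rcases eq_or_ne d 1 with rfl | hd
  · rw [charpoly, det_unique, charmatrix_apply_eq, funMatrix_apply,
      if_pos (Subsingleton.elim _ _), Fintype.prod_unique, pow_one]
  obtain ⟨m, rfl⟩ : ∃ m, d = m + 2 := ⟨d - 2, by have := NeZero.ne d; omega⟩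
  have : Fact (1 < m + 2) := ⟨by omega⟩
  have hne : ∀ i : ZMod (m + 2), i + 1 ≠ i := fun i => by simp
  have hρ : Equiv.addRight (1 : ZMod (m + 2)) ≠ 1 := fun h => hne 0 (congrArg (· 0) h)
  -- only the identity and the rotation avoid the zeros of the characteristic matrix
  have hvanish : ∀ σ ∈ univ, σ ∉ ({1, Equiv.addRight 1} : Finset _) →
      Equiv.Perm.sign σ • ∏ i, charmatrix (funMatrix (· + 1) v) (σ i) i = 0 := by
    intro σ _ hσ
    simp only [mem_insert, mem_singleton, not_or] at hσ
    obtain ⟨i, hi⟩ : ∃ i, ¬(σ i = i ∨ σ i = i + 1) := by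
      by_contra! h
      exact (Equiv.Perm.eq_one_or_eq_addRight_one h).elim hσ.1 hσ.2
    push Not at hi
    rw [prod_eq_zero (mem_univ i), smul_zero]
    rw [charmatrix_apply_ne _ _ _ hi.1, funMatrix_apply, if_neg hi.2, map_zero, neg_zero]
  have hsign : Equiv.Perm.sign (Equiv.addRight (1 : ZMod (m + 2))) = (-1) ^ (m + 1) := by
    have hrot : (Equiv.addRight 1 : Equiv.Perm (Fin (m + 2))) = finRotate (m + 2) :=
      Equiv.ext fun i => (finRotate_apply i).symm
    exact hrot ▸ sign_finRotate (m + 2)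
  rw [charpoly, det_apply, ← sum_subset (subset_univ _) hvanish, sum_pair hρ.symm]
  have hdiag : ∀ i, charmatrix (funMatrix (· + 1) v) i i = X := fun i => by
    rw [charmatrix_apply_eq, funMatrix_apply, if_neg (hne i).symm, map_zero, sub_zero]
  have hcyc : ∀ i, charmatrix (funMatrix (· + 1) v) (i + 1) i = -C (v i) := fun i => by
    rw [charmatrix_apply_ne _ _ _ (hne i), funMatrix_apply, if_pos rfl]
  simp only [Equiv.Perm.one_apply, Equiv.coe_addRight, hdiag, hcyc, Equiv.Perm.sign_one,
    one_smul, prod_const, card_univ, ZMod.card, hsign, prod_neg, map_prod]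
  rw [Units.smul_def, zsmul_eq_mul]
  push_cast
  have hodd : (-1 : R[X]) ^ (m + 1) * (-1) ^ (m + 2) = -1 := by
    rw [← pow_add]; exact Odd.neg_one_pow ⟨m + 1, by ring⟩
  rw [← mul_assoc, hodd]
  ring

open Equiv Perm in
theorem charpoly_toSquareBlock_funMatrix_sameCycleFinset (σ : Perm ι) (w : ι → R) (x : ι) :
    ((funMatrix σ w).toSquareBlock σ.sameCycleFinset (σ.sameCycleFinset x)).charpoly =
      X ^ #(σ.sameCycleFinset x) - C (∏ t ∈ σ.sameCycleFinset x, w t) := by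
  set O := σ.sameCycleFinset x
  set E : ZMod (minimalPeriod (σ • ·) x) ≃ {y // σ.sameCycleFinset y = O} :=
    (MulAction.orbitZPowersEquiv σ x).symm.trans (subtypeEquivRight fun y => by
      rw [sameCycleFinset_eq_iff, sameCycle_iff_mem_orbit_zpowers])
  have hE : ∀ c, (E (c + 1) : ι) = σ (E c) := by
    have hpow : ∀ i : ℤ, (E i : ι) = (σ ^ i) x := fun i => by
      simp only [E, Equiv.trans_apply, subtypeEquivRight_apply_coe,
        MulAction.orbitZPowersEquiv_symm_apply']
      rfl
    intro c
    obtain ⟨i, rfl⟩ := ZMod.intCast_surjective c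
    rw [← Int.cast_one, ← Int.cast_add, hpow, hpow, add_comm, _root_.zpow_one_add,
      Equiv.Perm.mul_apply]
  have hO : ∀ y, σ.sameCycleFinset y = O ↔ y ∈ O := fun y => by
    rw [sameCycleFinset_eq_iff, mem_sameCycleFinset]
  set E' : ZMod (minimalPeriod (σ • ·) x) ≃ {y // y ∈ O} := E.trans (subtypeEquivRight hO)
  rw [← charpoly_reindex E.symm,
    show reindex E.symm E.symm _ = funMatrix (· + 1) (w ∘ (↑) ∘ E) from
      submatrix_funMatrix (Subtype.val_injective.comp E.injective) (fun c => (hE c).symm) w,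
    charpoly_funMatrix_add_one, ← Fintype.card_coe O, ← Fintype.card_congr E', ZMod.card,
    ← prod_coe_sort O, ← E'.prod_comp]
  rfl

theorem charpoly_funMatrix_perm (σ : Equiv.Perm ι) (w : ι → R) :
    (funMatrix σ w).charpoly =
      ∏ O ∈ univ.image σ.sameCycleFinset, (X ^ #O - C (∏ t ∈ O, w t)) := by
  rw [charpoly_eq_prod_of_blockDiagonal _ σ.sameCycleFinset]
  · refine prod_congr rfl fun O hO => ?_
    obtain ⟨x, -, rfl⟩ := mem_image.mp hO
    exact charpoly_toSquareBlock_funMatrix_sameCycleFinset σ w x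
  · intro i j hij
    refine if_neg fun h => hij ((σ.sameCycleFinset_eq_iff).mpr ⟨1, ?_⟩)
    rw [h, zpow_one]

end PermutationMatrices

section Conj

variable {R ι : Type*} [CommRing R] [Fintype ι] [DecidableEq ι]

lemma charpoly_eq_of_mul_eq_mul {A B F : Matrix ι ι R} (hF : IsUnit F) (h : A * F = F * B) :
    A.charpoly = B.charpoly := by
  obtain ⟨U, rfl⟩ := hF
  rw [← charpoly_units_conj U B, ← h, ← coe_units_inv, Units.mul_inv_cancel_right]

end Conj

section Fourier

variable {A K : Type*} [CommRing A] [Fintype A] [DecidableEq A]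

def fourierMatrix [CommRing K] (ψ : AddChar A K) : Matrix A A K := of fun i j => ψ (i * j)

def fourierSum [CommRing K] (ψ : AddChar A K) (a : A → K) (t : A) : K := ∑ u, a u * ψ (u * t)

lemma fourierMatrix_mul_fourierMatrix_inv [CommRing K] [IsDomain K] {ψ : AddChar A K}
    (hψ : ψ.IsPrimitive) :
    fourierMatrix ψ * fourierMatrix ψ⁻¹ = (Fintype.card A : K) • 1 := by
  ext i j
  have hij : ∀ l, i * l + -(l * j) = l * (i - j) := fun l => by ring
  simp only [mul_apply, Matrix.smul_apply, Matrix.one_apply, fourierMatrix, of_apply,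
    AddChar.inv_apply, ← AddChar.map_add_eq_mul, hij, AddChar.sum_mulShift _ hψ, sub_eq_zero]
  split_ifs <;> simp

lemma isUnit_fourierMatrix [Field K] [CharZero K] {ψ : AddChar A K} (hψ : ψ.IsPrimitive) :
    IsUnit (fourierMatrix ψ) := by
  have hcard : (Fintype.card A : K) ≠ 0 := Nat.cast_ne_zero.mpr Fintype.card_ne_zero
  refine (isUnit_iff_isUnit_det _).mpr (isUnit_det_of_right_inverse
    (B := (Fintype.card A : K)⁻¹ • fourierMatrix ψ⁻¹) ?_)
  rw [mul_smul_comm, fourierMatrix_mul_fourierMatrix_inv hψ, smul_smul, inv_mul_cancel₀ hcard,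
    one_smul]

end Fourier

section KCirculant

variable {n : ℕ} [NeZero n]

lemma kCirculant_mul_fourierMatrix (k : ℕ) (ψ : AddChar (ZMod n) ℂ) (a : ZMod n → ℂ) :
    kCirculant n k a * fourierMatrix ψ =
      fourierMatrix ψ * funMatrix ((k : ZMod n) * ·) (fourierSum ψ a) := by
  ext i t
  rw [mul_apply, mul_apply, ← Equiv.sum_comp (Equiv.addRight ((k : ZMod n) * i))]
  simp only [kCirculant, fourierMatrix, funMatrix_apply, fourierSum, of_apply,
    Equiv.coe_addRight, add_sub_cancel_right, mul_ite, mul_zero, sum_ite_eq', mem_univ, if_true,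
    add_mul, AddChar.map_add_eq_mul, mul_sum]
  refine sum_congr rfl fun u _ => ?_
  rw [show i * ((k : ZMod n) * t) = k * i * t by ring]
  ring

lemma charpoly_kCirculant (k : ℕ) (a : ZMod n → ℂ) :
    (kCirculant n k a).charpoly =
      (funMatrix ((k : ZMod n) * ·) (fourierSum ZMod.stdAddChar a)).charpoly :=
  charpoly_eq_of_mul_eq_mul (isUnit_fourierMatrix (ZMod.isPrimitive_stdAddChar n))
    (kCirculant_mul_fourierMatrix k _ a)

lemma dftEig_eq_fourierSum (a : ZMod n → ℂ) (j : ℕ) :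
    dftEig n a j = fourierSum ZMod.stdAddChar a j := by
  symm
  refine sum_nbij' (fun u => u.val) (fun l => (l : ZMod n)) (fun u _ => mem_range.mpr u.val_lt)
    (fun _ _ => mem_univ _) (fun u _ => ZMod.natCast_zmod_val u)
    (fun l hl => ZMod.val_natCast_of_lt (mem_range.mp hl)) fun u _ => ?_
  conv_lhs => rw [← ZMod.natCast_zmod_val u]
  rw [← Nat.cast_mul, ZMod.stdAddChar_apply, ZMod.toCircle_natCast]
  push_cast
  ring_nf

end KCirculant

lemma Nat.dvd_pow_self_of_forall_prime_dvd {m k : ℕ} (hm : m ≠ 0)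
    (h : ∀ p, p.Prime → p ∣ m → p ∣ k) : m ∣ k ^ m := by
  rcases eq_or_ne k 0 with rfl | hk
  · rw [zero_pow hm]
    exact dvd_zero m
  refine (Nat.dvd_radical_pow_self hm).trans (pow_dvd_pow_of_dvd ?_ m)
  refine (Nat.radical_dvd_iff hk).mpr fun p hp => ?_
  obtain ⟨hp, hpm, -⟩ := Nat.mem_primeFactors.mp hp
  exact Nat.mem_primeFactors.mpr ⟨hp, h p hp hpm, hk⟩

lemma Nat.div_dvd_pow_of_forall_coprime_dvd {n k n' : ℕ} (hn : n ≠ 0) (hdvd : n' ∣ n)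
    (hcop : n'.Coprime k) (hmax : ∀ d, d ∣ n → d.Coprime k → d ∣ n') :
    n / n' ∣ k ^ (n / n') := by
  have hn' : n' ≠ 0 := by rintro rfl; exact hn (Nat.eq_zero_of_zero_dvd hdvd)
  refine Nat.dvd_pow_self_of_forall_prime_dvd (Nat.div_ne_zero_iff_of_dvd hdvd |>.mpr ⟨hn, hn'⟩)
    fun p hp hpm => ?_
  by_contra hpk
  have hpn : n' * p ∣ n := by
    simpa [Nat.mul_div_cancel' hdvd] using Nat.mul_dvd_mul_left n' hpm
  have hdvd' := hmax _ hpn (hcop.mul_left ((hp.coprime_iff_not_dvd).mpr hpk))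
  exact hp.one_lt.ne' (Nat.dvd_one.mp ((Nat.mul_dvd_mul_iff_left (Nat.pos_of_ne_zero hn')).mp
    (by simpa using hdvd')))

section ScaleEmbedding

variable {n n' : ℕ}

def scaleEmbedding (n n' : ℕ) (s : ZMod n') : ZMod n := ((s.val * (n / n') : ℕ) : ZMod n)

lemma scaleEmbedding_natCast (hdvd : n' ∣ n) (x : ℕ) :
    scaleEmbedding n n' x = ((x * (n / n') : ℕ) : ZMod n) := by
  rw [scaleEmbedding, ZMod.natCast_eq_natCast_iff, ZMod.val_natCast]
  simpa [Nat.mul_div_cancel' hdvd] using (Nat.mod_modEq x n').mul_right' (n / n')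

lemma scaleEmbedding_injective [NeZero n] [NeZero n'] (hdvd : n' ∣ n) :
    Injective (scaleEmbedding n n') := by
  intro s t h
  rw [scaleEmbedding, scaleEmbedding, ZMod.natCast_eq_natCast_iff] at h
  have h' : s.val * (n / n') ≡ t.val * (n / n') [MOD n' * (n / n')] := by
    rwa [Nat.mul_div_cancel' hdvd]
  have hm : n / n' ≠ 0 := Nat.div_ne_zero_iff_of_dvd hdvd |>.mpr ⟨NeZero.ne n, NeZero.ne n'⟩
  rw [← ZMod.natCast_zmod_val s, ← ZMod.natCast_zmod_val t, ZMod.natCast_eq_natCast_iff]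
  exact h'.mul_right_cancel' hm

lemma scaleEmbedding_mul [NeZero n'] (hdvd : n' ∣ n) (k : ℕ) (s : ZMod n') :
    scaleEmbedding n n' (k * s) = k * scaleEmbedding n n' s := by
  rw [← ZMod.natCast_zmod_val s, ← Nat.cast_mul, scaleEmbedding_natCast hdvd,
    scaleEmbedding_natCast hdvd]
  push_cast
  ring

lemma div_mul_mem_range_scaleEmbedding [NeZero n] (hdvd : n' ∣ n) (t : ZMod n) :
    ((n / n' : ℕ) : ZMod n) * t ∈ Set.range (scaleEmbedding n n') :=
  ⟨t.val, by rw [scaleEmbedding_natCast hdvd]; push_cast; rw [ZMod.natCast_zmod_val, mul_comm]⟩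

end ScaleEmbedding

lemma orbitS_eq_sameCycleFinset (n' k : ℕ) [NeZero n'] {σ : Equiv.Perm (ZMod n')}
    (hσ : ∀ x, σ x = k * x) : orbitS n' k = σ.sameCycleFinset := by
  have hpow : ∀ (b : ℕ) x, (σ ^ b) x = x * (k : ZMod n') ^ b := by
    intro b x
    induction b with
    | zero => simp
    | succ b ih => rw [pow_succ', Equiv.Perm.mul_apply, ih, hσ]; ring
  funext x
  ext y
  rw [orbitS, Set.Finite.mem_toFinset, Equiv.Perm.mem_sameCycleFinset]
  constructor
  · rintro ⟨b, rfl⟩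
    exact ⟨b, by rw [zpow_natCast, hpow]⟩
  · intro h
    obtain ⟨b, rfl⟩ := h.exists_nat_pow_eq
    exact ⟨b, hpow b x⟩

/-- `n'` is the largest divisor of `n` coprime to `k`, i.e. the `n'` of `n = n' ∏ p_q^{β_q}`. -/
theorem stmt0_general (n k n' : ℕ) [NeZero n] [NeZero n']
    (hdvd : n' ∣ n) (hcop : Nat.Coprime n' k)
    (hmax : ∀ d : ℕ, d ∣ n → Nat.Coprime d k → d ∣ n')
    (a : ZMod n → ℂ) :
    (kCirculant n k a).charpoly =
      X ^ (n - n') *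
        ∏ O ∈ Finset.image (orbitS n' k) Finset.univ,
          (X ^ O.card - C (∏ t ∈ O, dftEig n a (t.val * (n / n')))) := by
  set σ : Equiv.Perm (ZMod n') := MulAction.toPerm (ZMod.unitOfCoprime k hcop.symm)
  have hσ : ∀ t, σ t = k * t := fun t => by simp [σ, Units.smul_def]
  have hrange : ∀ t, ((k : ZMod n) * ·)^[n / n'] t ∈ Set.range (scaleEmbedding n n') := by
    obtain ⟨q, hq⟩ := Nat.div_dvd_pow_of_forall_coprime_dvd (NeZero.ne n) hdvd hcop hmax
    intro t
    simp only [mul_left_iterate]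
    rw [← Nat.cast_pow, hq, Nat.cast_mul, mul_assoc]
    exact div_mul_mem_range_scaleEmbedding hdvd _
  rw [charpoly_kCirculant, charpoly_funMatrix_of_iterate_mem_range (g := σ)
    (scaleEmbedding_injective hdvd) (fun s => by rw [hσ, scaleEmbedding_mul hdvd]) hrange,
    charpoly_funMatrix_perm, orbitS_eq_sameCycleFinset n' k hσ, ZMod.card, ZMod.card]
  simp only [dftEig_eq_fourierSum]
  rfl

/-- Zhou's formula for the characteristic polynomial of the `k`-circulant:
`χ(A_{k,n})(λ) = λ^{n−n'} ∏_j (λ^{n_j} − Π_j)`, the product ranging over the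
distinct sets `P_j` of the eigenvalue partition of `Z_{n'}` (the distinct orbits
`S(x)`, `x ∈ Z_{n'}`), with `n_j = #P_j` and `Π_j = ∏_{t ∈ P_j} λ_{t n/n'}`.
Here `n'` is the part of `n` coprime to `k`, characterized by: `n' ∣ n`,
`gcd(n', k) = 1`, and every divisor of `n` coprime to `k` divides `n'`. -/
theorem stmt0 (n k n' : ℕ) [NeZero n] [NeZero n'] (hk : 0 < k)
    (hdvd : n' ∣ n) (hcop : Nat.Coprime n' k)
    (hmax : ∀ d : ℕ, d ∣ n → Nat.Coprime d k → d ∣ n')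
    (a : ZMod n → ℂ) :
    (kCirculant n k a).charpoly =
      X ^ (n - n') *
        ∏ O ∈ Finset.image (orbitS n' k) Finset.univ,
          (X ^ O.card - C (∏ t ∈ O, dftEig n a (t.val * (n / n')))) :=
  stmt0_general n k n' hdvd hcop hmax a
end

section
/- Let n', k be positive integers with gcd(k, n') = 1, let g_1 be the smallest positive integer b with k^b ≡ 1 (mod n'), and suppose g divides g_1. Set m = gcd(k^g − 1, n'), X(g) = {x ∈ Z_{n'} : g_x = g}, and Y(g) = {b·(n'/m) : 0 ≤ b < m}. Then X(g) ⊆ Y(g), #Y(g) = m, and ∪_{h : h | g} X(h) = Y(g). -/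
/-- The order `g_x` of `x ∈ Z_{n'}`: the smallest positive integer `b` such that
`x k^b ≡ x (mod n')`. -/
noncomputable def ordOf (n' k : ℕ) (x : ZMod n') : ℕ :=
  sInf {b : ℕ | 0 < b ∧ x * (k : ZMod n') ^ b = x}

lemma ordOf_mem (n' k : ℕ) [NeZero n'] (hcop : Nat.Coprime k n') (x : ZMod n') :
    0 < ordOf n' k x ∧ x * (k : ZMod n') ^ (ordOf n' k x) = x := by
  have hk1 : (k : ZMod n') ^ (Nat.totient n') = 1 := by
    have hpt := ZMod.pow_totient (ZMod.unitOfCoprime k hcop)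
    have h2 : ((ZMod.unitOfCoprime k hcop : (ZMod n')ˣ) : ZMod n') = k :=
      ZMod.coe_unitOfCoprime k hcop
    calc (k : ZMod n') ^ (Nat.totient n')
        = ((ZMod.unitOfCoprime k hcop ^ Nat.totient n' : (ZMod n')ˣ) : ZMod n') := by
          rw [Units.val_pow_eq_pow_val, h2]
      _ = 1 := by rw [hpt]; rfl
  have hne : (Nat.totient n') ∈ {b : ℕ | 0 < b ∧ x * (k : ZMod n') ^ b = x} := by
    refine ⟨Nat.totient_pos.mpr (Nat.pos_of_ne_zero (NeZero.ne n')), ?_⟩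
    rw [hk1, mul_one]
  exact Nat.sInf_mem ⟨_, hne⟩

lemma ordOf_dvd_iff (n' k : ℕ) [NeZero n'] (hcop : Nat.Coprime k n') (x : ZMod n') (b : ℕ) :
    ordOf n' k x ∣ b ↔ x * (k : ZMod n') ^ b = x := by
  obtain ⟨hpos, heq⟩ := ordOf_mem n' k hcop x
  set o := ordOf n' k x with ho
  have key : ∀ t : ℕ, x * (k : ZMod n') ^ (o * t) = x := by
    intro t
    induction t with
    | zero => simp
    | succ t ih =>
      rw [Nat.mul_succ, pow_add, ← mul_assoc, ih, heq]
  constructor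
  · rintro ⟨t, rfl⟩; exact key t
  · intro hb
    rcases Nat.eq_zero_or_pos (b % o) with hr | hr
    · exact Nat.dvd_of_mod_eq_zero hr
    · exfalso
      have hb' : x * (k : ZMod n') ^ (b % o) = x := by
        have := key (b / o)
        calc x * (k : ZMod n') ^ (b % o)
            = x * (k : ZMod n') ^ (o * (b / o)) * (k : ZMod n') ^ (b % o) := by rw [this]
          _ = x * (k : ZMod n') ^ (o * (b / o) + b % o) := by rw [pow_add, mul_assoc]
          _ = x := by rw [Nat.div_add_mod]; exact hb
      have hmem : (b % o) ∈ {b : ℕ | 0 < b ∧ x * (k : ZMod n') ^ b = x} := ⟨hr, hb'⟩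
      have h3 : o ≤ b % o := Nat.sInf_le hmem
      have hlt := Nat.mod_lt b hpos
      omega

/-- With `m = gcd(k^g − 1, n')`, `X(g) = {x : g_x = g}` and
`Y(g) = {b·(n'/m) : 0 ≤ b < m}`, one has `X(g) ⊆ Y(g)`, `#Y(g) = m` and
`⋃_{h ∣ g} X(h) = Y(g)`, provided `g ∣ g_1`. -/
theorem stmt7 (n' k g : ℕ) (hn' : 0 < n') (hk : 0 < k) (hcop : Nat.Coprime k n')
    (hg : g ∣ ordOf n' k 1)
    (m : ℕ) (hm : m = Nat.gcd (k ^ g - 1) n')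
    (X : ℕ → Set (ZMod n')) (hX : ∀ h, X h = {x : ZMod n' | ordOf n' k x = h})
    (Y : Set (ZMod n')) (hY : Y = {y : ZMod n' | ∃ b : ℕ, b < m ∧ y = ((b * (n' / m) : ℕ) : ZMod n')}) :
    X g ⊆ Y ∧ Y.ncard = m ∧ (⋃ h ∈ {h : ℕ | h ∣ g}, X h) = Y := by
  haveI : NeZero n' := ⟨hn'.ne'⟩
  set c : ℕ := k ^ g - 1 with hc
  have hkg1 : 1 ≤ k ^ g := Nat.one_le_pow _ _ hk
  have hmpos : 0 < m := hm ▸ Nat.gcd_pos_of_pos_right _ hn'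
  have hmdvdn : m ∣ n' := hm ▸ Nat.gcd_dvd_right _ _
  have hmdvdc : m ∣ c := hm ▸ Nat.gcd_dvd_left _ _
  have hnm : n' / m * m = n' := Nat.div_mul_cancel hmdvdn
  have hnmpos : 0 < n' / m := Nat.div_pos (Nat.le_of_dvd hn' hmdvdn) hmpos
  -- cast identity
  have hcast : ((c : ℕ) : ZMod n') = (k : ZMod n') ^ g - 1 := by
    rw [hc, Nat.cast_sub hkg1]
    push_cast
    ring
  -- x * k^g = x ↔ x * c = 0
  have hfix : ∀ x : ZMod n', (x * (k : ZMod n') ^ g = x ↔ x * (c : ZMod n') = 0) := by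
    intro x
    rw [hcast, mul_sub, mul_one, sub_eq_zero]
  -- kernel characterization
  have hker : ∀ x : ZMod n', (x * (c : ZMod n') = 0 ↔ ∃ b : ℕ, b < m ∧ x = ((b * (n' / m) : ℕ) : ZMod n')) := by
    intro x
    constructor
    · intro hx
      set v := x.val with hv
      have hvlt : v < n' := ZMod.val_lt x
      have hxv : ((v : ℕ) : ZMod n') = x := ZMod.natCast_rightInverse x
      have hdvd : n' ∣ v * c := by
        have : ((v * c : ℕ) : ZMod n') = 0 := by push_cast; rw [hxv]; exact hx
        exact (ZMod.natCast_eq_zero_iff _ _).mp this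
      -- n'/m ∣ v
      have hcop' : Nat.Coprime (c / m) (n' / m) := by
        rw [hm]; exact Nat.coprime_div_gcd_div_gcd (hm ▸ hmpos)
      have hdvd2 : n' / m ∣ v * (c / m) := by
        have h1 : (n' / m) * m ∣ v * ((c / m) * m) := by
          rw [hnm, Nat.div_mul_cancel hmdvdc]; exact hdvd
        have h2 : (n' / m) * m ∣ (v * (c / m)) * m := by
          rwa [← mul_assoc] at h1
        exact (Nat.mul_dvd_mul_iff_right hmpos).mp h2
      have hdvdv : n' / m ∣ v :=
        (Nat.Coprime.dvd_of_dvd_mul_right (Nat.Coprime.symm hcop') hdvd2)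
      obtain ⟨b, hb⟩ := hdvdv
      refine ⟨b, ?_, ?_⟩
      · have : n' / m * b < n' / m * m := by rw [hnm, ← hb]; exact hvlt
        exact lt_of_mul_lt_mul_left this (Nat.zero_le _)
      · rw [← hxv, hb, Nat.mul_comm]
    · rintro ⟨b, hb, rfl⟩
      obtain ⟨c', hc'⟩ := hmdvdc
      have : ((b * (n' / m) * c : ℕ) : ZMod n') = 0 := by
        rw [(ZMod.natCast_eq_zero_iff _ _)]
        refine ⟨b * c', ?_⟩
        calc b * (n' / m) * c = n' / m * m * (b * c') := by rw [hc']; ring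
          _ = n' * (b * c') := by rw [hnm]
      rw [← this]; push_cast; ring
  -- x * k^g = x ↔ ordOf x ∣ g
  have hordg : ∀ x : ZMod n', (ordOf n' k x ∣ g ↔ x * (k : ZMod n') ^ g = x) :=
    fun x => ordOf_dvd_iff n' k hcop x g
  -- Y = kernel
  have hYker : Y = {x : ZMod n' | x * (c : ZMod n') = 0} := by
    rw [hY]; ext x; exact (hker x).symm
  constructor
  · intro x hx
    rw [hX g] at hx
    rw [hYker]
    exact (hfix x).mp ((hordg x).mp (hx ▸ dvd_refl _))
  constructor
  · -- cardinality
    have hYfin : Y = ↑((Finset.range m).image fun b => ((b * (n' / m) : ℕ) : ZMod n')) := by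
      rw [hY]; ext x
      simp only [Finset.coe_image, Finset.coe_range, Set.mem_image, Set.mem_Iio,
        Set.mem_setOf_eq]
      constructor
      · rintro ⟨b, hb, rfl⟩; exact ⟨b, hb, rfl⟩
      · rintro ⟨b, hb, rfl⟩; exact ⟨b, hb, rfl⟩
    rw [hYfin, Set.ncard_coe_finset]
    rw [Finset.card_image_of_injOn, Finset.card_range]
    intro b1 hb1 b2 hb2 heq
    simp only [Finset.coe_range, Set.mem_Iio] at hb1 hb2
    have hlt1 : b1 * (n' / m) < n' := by
      calc b1 * (n' / m) < m * (n' / m) := by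
            exact (Nat.mul_lt_mul_right hnmpos).mpr hb1
        _ = n' := by rw [Nat.mul_comm]; exact hnm
    have hlt2 : b2 * (n' / m) < n' := by
      calc b2 * (n' / m) < m * (n' / m) := by
            exact (Nat.mul_lt_mul_right hnmpos).mpr hb2
        _ = n' := by rw [Nat.mul_comm]; exact hnm
    have heq' : ((b1 * (n' / m) : ℕ) : ZMod n') = ((b2 * (n' / m) : ℕ) : ZMod n') := heq
    have : b1 * (n' / m) = b2 * (n' / m) := by
      have h1 := ZMod.val_cast_of_lt hlt1
      have h2 := ZMod.val_cast_of_lt hlt2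
      rw [← h1, ← h2, heq']
    exact Nat.eq_of_mul_eq_mul_right hnmpos this
  · -- union
    ext x
    simp only [Set.mem_iUnion, Set.mem_setOf_eq, exists_prop]
    rw [hYker]
    constructor
    · rintro ⟨h, hdvd, hxh⟩
      rw [hX h, Set.mem_setOf_eq] at hxh
      exact Set.mem_setOf_eq ▸ (hfix x).mp ((hordg x).mp (hxh ▸ hdvd))
    · intro hx
      refine ⟨ordOf n' k x, ?_, ?_⟩
      · exact (hordg x).mpr ((hfix x).mpr hx)
      · rw [hX]; rfl
end

section
/- Let n', k be positive integers with gcd(k, n') = 1 and let g_1, the smallest positive integer b with k^b ≡ 1 (mod n'), have prime factorization g_1 = q_1^{γ_1} q_2^{γ_2} ⋯ q_m^{γ_m} with q_1 < q_2 < ... < q_m primes. For 1 ≤ j ≤ m let L_j = {q_{i_1} q_{i_2} ⋯ q_{i_j} : 1 ≤ i_1 < ... < i_j ≤ m} and G_j = Σ_{ℓ ∈ L_j} gcd(k^{g_1/ℓ} − 1, n'). Then (i) #{x ∈ Z_{n'} : g_x < g_1} = G_1 − G_2 + G_3 − G_4 + ⋯ (alternating sum over j = 1, ..., m), and (ii)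 G_1 − G_2 + G_3 − G_4 + ⋯ ≤ G_1. -/
open Finset Function

theorem Nat.lt_iff_exists_mem_primeFactors_dvd_div {d n : ℕ} (hd : d ∣ n) :
    d < n ↔ ∃ p ∈ n.primeFactors, d ∣ n / p := by
  constructor
  · intro hlt
    obtain ⟨r, rfl⟩ := hd
    have hr : r ≠ 1 := by rintro rfl; simp at hlt
    obtain ⟨p, hp, hpr⟩ := Nat.exists_prime_and_dvd hr
    refine ⟨p, Nat.mem_primeFactors.2 ⟨hp, dvd_mul_of_dvd_right hpr d, by lia⟩, ?_⟩
    rw [Nat.mul_div_assoc d hpr]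
    exact dvd_mul_right d _
  · rintro ⟨p, hp, hdp⟩
    have hpn : p ≤ n := Nat.le_of_mem_primeFactors hp
    have hp0 : 0 < p := Nat.pos_of_mem_primeFactors hp
    calc d ≤ n / p := Nat.le_of_dvd (Nat.div_pos hpn hp0) hdp
      _ < n := Nat.div_lt_self (hp0.trans_le hpn) (Nat.prime_of_mem_primeFactors hp).one_lt

theorem Nat.forall_dvd_div_iff_dvd_div_prod {d n : ℕ} (hd : d ∣ n) {t : Finset ℕ}
    (ht : t ⊆ n.primeFactors) : (∀ p ∈ t, d ∣ n / p) ↔ d ∣ n / t.prod id := by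
  have hswap {e : ℕ} (he : e ∣ n) : d ∣ n / e ↔ e ∣ n / d := by
    rw [Nat.dvd_div_iff_mul_dvd he, Nat.dvd_div_iff_mul_dvd hd, mul_comm]
  have hprod : t.prod id ∣ n :=
    (prod_dvd_prod_of_subset t _ id ht).trans (Nat.prod_primeFactors_dvd n)
  have hmem {p : ℕ} (hp : p ∈ t) : d ∣ n / p ↔ p ∣ n / d :=
    hswap (Nat.dvd_of_mem_primeFactors (ht hp))
  rw [hswap hprod]
  refine ⟨fun h => prod_primes_dvd _ ?_ fun p hp => (hmem hp).1 (h p hp),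
    fun h p hp => (hmem hp).2 ((dvd_prod_of_mem id hp).trans h)⟩
  exact fun p hp => (Nat.prime_of_mem_primeFactors (ht hp)).prime

theorem Finset.inclusion_exclusion_card_biUnion_powersetCard {ι α : Type*} [DecidableEq ι]
    [DecidableEq α] (s : Finset ι) (S : ι → Finset α) (f : Finset ι → ℤ)
    (hf : ∀ t (ht : t.Nonempty), t ⊆ s → (#(t.inf' ht S) : ℤ) = f t) :
    (#(s.biUnion S) : ℤ) = ∑ j ∈ Icc 1 #s, (-1) ^ (j - 1) * ∑ t ∈ powersetCard j s, f t := by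
  calc (#(s.biUnion S) : ℤ) = ∑ t ∈ s.powerset with t.Nonempty, (-1) ^ (#t + 1) * f t := by
        rw [inclusion_exclusion_card_biUnion, ← sum_coe_sort _ fun t => (-1) ^ (#t + 1) * f t]
        refine sum_congr rfl fun t _ => ?_
        rw [hf _ _ (mem_powerset.1 (mem_filter.1 t.2).1)]
    _ = ∑ j ∈ range (#s + 1), ∑ t ∈ powersetCard j s with t.Nonempty, (-1) ^ (j + 1) * f t := by
        rw [sum_filter, sum_powerset]
        refine sum_congr rfl fun j _ => ?_
        rw [sum_filter]
        exact sum_congr rfl fun t ht => by rw [(mem_powersetCard.1 ht).2]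
    _ = _ := by
        rw [sum_range_succ', ← Ico_add_one_right_eq_Icc, sum_Ico_eq_sum_range, powersetCard_zero,
          filter_singleton, if_neg not_nonempty_empty, sum_empty, add_zero, add_tsub_cancel_right]
        refine sum_congr rfl fun j _ => ?_
        rw [filter_true_of_mem fun t ht => card_pos.1 ((mem_powersetCard.1 ht).2 ▸ j.succ_pos),
          mul_sum]
        simp [pow_succ, add_comm 1 j]

theorem ZMod.card_filter_natCast_mul_eq_zero {n : ℕ} [NeZero n] (a : ℕ) :
    #{x : ZMod n | (a : ZMod n) * x = 0} = a.gcd n := by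
  have hker := IsAddCyclic.card_nsmulAddMonoidHom_ker (ZMod n) a
  rw [Nat.card_zmod, Nat.gcd_comm] at hker
  rw [← hker, ← Fintype.card_subtype, ← Nat.card_eq_fintype_card]
  exact Nat.card_congr (Equiv.subtypeEquivRight fun x => by simp [nsmul_eq_mul])

theorem ZMod.card_filter_mul_pow_eq_self {n k : ℕ} [NeZero n] (hk : 0 < k) (d : ℕ) :
    #{x : ZMod n | x * (k : ZMod n) ^ d = x} = (k ^ d - 1).gcd n := by
  rw [← ZMod.card_filter_natCast_mul_eq_zero]
  congr! 2 with x
  rw [Nat.cast_sub (Nat.one_le_pow _ _ hk), Nat.cast_pow, Nat.cast_one, sub_mul, one_mul,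
    sub_eq_zero, mul_comm]

-- Both sides are `0` at non-periodic points (`sInf ∅ = 0`).
theorem ordOf_eq_minimalPeriod (n' k : ℕ) (x : ZMod n') :
    ordOf n' k x = minimalPeriod (· * (k : ZMod n')) x := by
  simp [ordOf, minimalPeriod_eq_sInf_n_pos_IsPeriodicPt, IsPeriodicPt, IsFixedPt]

theorem mul_pow_eq_self_iff_ordOf_dvd {n' k : ℕ} {x : ZMod n'} {d : ℕ} :
    x * (k : ZMod n') ^ d = x ↔ ordOf n' k x ∣ d := by
  rw [ordOf_eq_minimalPeriod, ← isPeriodicPt_iff_minimalPeriod_dvd, IsPeriodicPt, IsFixedPt,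
    mul_right_iterate_apply]

theorem pow_ordOf_one (n' k : ℕ) : (k : ZMod n') ^ ordOf n' k 1 = 1 := by
  simpa using (mul_pow_eq_self_iff_ordOf_dvd (x := (1 : ZMod n')) (k := k)).2 dvd_rfl

theorem ordOf_dvd_ordOf_one (n' k : ℕ) (x : ZMod n') : ordOf n' k x ∣ ordOf n' k 1 :=
  mul_pow_eq_self_iff_ordOf_dvd.1 (by rw [pow_ordOf_one, mul_one])

theorem stmt8_general (n' k : ℕ) (hn' : 0 < n') (hk : 0 < k)
    (g₁ : ℕ) (hg₁ : g₁ = ordOf n' k 1)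
    (m : ℕ) (hm : m = g₁.primeFactors.card)
    (G : ℕ → ℤ)
    (hG : ∀ j, G j = ∑ T ∈ Finset.powersetCard j g₁.primeFactors,
        ((Nat.gcd (k ^ (g₁ / T.prod id) - 1) n' : ℤ))) :
    (({x : ZMod n' | ordOf n' k x < g₁}.ncard : ℤ) =
        ∑ j ∈ Finset.Icc 1 m, (-1) ^ (j - 1) * G j) ∧
      (∑ j ∈ Finset.Icc 1 m, (-1 : ℤ) ^ (j - 1) * G j ≤ G 1) := by
  have : NeZero n' := ⟨hn'.ne'⟩
  set S : ℕ → Finset (ZMod n') := fun q => {x | x * (k : ZMod n') ^ (g₁ / q) = x}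
  have hdvd (x : ZMod n') : ordOf n' k x ∣ g₁ := hg₁ ▸ ordOf_dvd_ordOf_one n' k x
  have hcard : ({x : ZMod n' | ordOf n' k x < g₁}.ncard : ℤ) = #(g₁.primeFactors.biUnion S) := by
    have hunion : {x : ZMod n' | ordOf n' k x < g₁} = ↑(g₁.primeFactors.biUnion S) := by
      ext x
      simp [S, Nat.lt_iff_exists_mem_primeFactors_dvd_div (hdvd x), mul_pow_eq_self_iff_ordOf_dvd]
    rw [hunion, Set.ncard_coe_finset]
  have hinter (t : Finset ℕ) (ht : t.Nonempty) (hts : t ⊆ g₁.primeFactors) :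
      (#(t.inf' ht S) : ℤ) = (k ^ (g₁ / t.prod id) - 1).gcd n' := by
    rw [← ZMod.card_filter_mul_pow_eq_self hk]
    congr 2
    ext x
    simp [S, mul_pow_eq_self_iff_ordOf_dvd, Nat.forall_dvd_div_iff_dvd_div_prod (hdvd x) hts]
  have hcount : ({x : ZMod n' | ordOf n' k x < g₁}.ncard : ℤ) =
      ∑ j ∈ Finset.Icc 1 m, (-1) ^ (j - 1) * G j := by
    simp_rw [hcard, hm, hG]
    exact inclusion_exclusion_card_biUnion_powersetCard _ _ _ hinter
  refine ⟨hcount, ?_⟩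
  rw [← hcount, hcard]
  calc (#(g₁.primeFactors.biUnion S) : ℤ) ≤ ∑ q ∈ g₁.primeFactors, (#(S q) : ℤ) := by
        exact_mod_cast card_biUnion_le
    _ = G 1 := by
        rw [hG 1, powersetCard_one, sum_map]
        simp [S, ZMod.card_filter_mul_pow_eq_self hk]

/-- Inclusion–exclusion count of the elements of order `< g_1`.
Here `g_1` has `m` distinct prime factors `q_1 < … < q_m`, `L_j` is identified with
the `j`-element subsets of the set of prime factors of `g_1` (via their products),
and `G j = Σ_{ℓ ∈ L_j} gcd(k^{g_1/ℓ} − 1, n')`. Then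
`#{x : g_x < g_1} = G 1 − G 2 + G 3 − ⋯` and this alternating sum is `≤ G 1`. -/
theorem stmt8 (n' k : ℕ) (hn' : 0 < n') (hk : 0 < k) (hcop : Nat.Coprime k n')
    (g₁ : ℕ) (hg₁ : g₁ = ordOf n' k 1)
    (m : ℕ) (hm : m = g₁.primeFactors.card)
    (G : ℕ → ℤ)
    (hG : ∀ j, G j = ∑ T ∈ Finset.powersetCard j g₁.primeFactors,
        ((Nat.gcd (k ^ (g₁ / T.prod id) - 1) n' : ℤ))) :
    (({x : ZMod n' | ordOf n' k x < g₁}.ncard : ℤ) =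
        ∑ j ∈ Finset.Icc 1 m, (-1) ^ (j - 1) * G j) ∧
      (∑ j ∈ Finset.Icc 1 m, (-1 : ℤ) ^ (j - 1) * G j ≤ G 1) :=
  stmt8_general n' k hn' hk g₁ hg₁ m hm G hG
end

section
/- Let n', k be positive integers with gcd(k, n') = 1, and let g_1 be the smallest positive integer b with k^b ≡ 1 (mod n'). If g_1 ≥ 4 is even and k^{g_1/2} ≡ −1 (mod n'), then n' · υ_{k,n'} = #{x ∈ Z_{n'} : g_x < g_1} ≤ 1 + Σ_{b : b | g_1, b ≥ 3} gcd(k^{g_1/b} − 1, n'). -/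
/-- If `g_1 ≥ 4` is even and `k^{g_1/2} ≡ −1 (mod n')`, then
`#{x ∈ Z_{n'} : g_x < g_1} ≤ 1 + Σ_{b ∣ g_1, b ≥ 3} gcd(k^{g_1/b} − 1, n')`. -/
theorem stmt10 (n' k : ℕ) (hn' : 0 < n') (hk : 0 < k) (hcop : Nat.Coprime k n')
    (g₁ : ℕ) (hg₁ : g₁ = ordOf n' k 1) (hg₁4 : 4 ≤ g₁) (hg₁even : Even g₁)
    (hkneg : (k : ZMod n') ^ (g₁ / 2) = -1) :
    {x : ZMod n' | ordOf n' k x < g₁}.ncard ≤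
      1 + ∑ b ∈ g₁.divisors.filter (fun b => 3 ≤ b), Nat.gcd (k ^ (g₁ / b) - 1) n' := by
  classical
  haveI : NeZero n' := ⟨hn'.ne'⟩
  set K : ZMod n' := (k : ZMod n') with hK
  have hu : IsUnit K := (ZMod.isUnit_iff_coprime k n').mpr hcop
  -- K has finite order
  have hKfin : K ^ Nat.card (ZMod n')ˣ = 1 := by
    obtain ⟨u, hu⟩ := hu
    rw [← hu, ← Units.val_pow_eq_pow_val, pow_card_eq_one', Units.val_one]
  have hNpos : 0 < Nat.card (ZMod n')ˣ := Nat.card_pos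
  have hS1ne : {b : ℕ | 0 < b ∧ (1 : ZMod n') * K ^ b = 1}.Nonempty :=
    ⟨Nat.card (ZMod n')ˣ, hNpos, by rw [one_mul, hKfin]⟩
  have hg₁mem : 0 < g₁ ∧ (1 : ZMod n') * K ^ g₁ = 1 := by
    rw [hg₁]; exact Nat.sInf_mem hS1ne
  have hg₁pos : 0 < g₁ := hg₁mem.1
  have hKg₁ : K ^ g₁ = 1 := by have := hg₁mem.2; rwa [one_mul] at this
  have hne : ∀ x : ZMod n', {b : ℕ | 0 < b ∧ x * K ^ b = x}.Nonempty :=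
    fun x => ⟨g₁, hg₁pos, by rw [hKg₁, mul_one]⟩
  have hordmem : ∀ x : ZMod n', 0 < ordOf n' k x ∧ x * K ^ (ordOf n' k x) = x :=
    fun x => Nat.sInf_mem (hne x)
  have hdvd : ∀ (x : ZMod n') (b : ℕ), x * K ^ b = x → ordOf n' k x ∣ b := by
    intro x b hb
    set g := ordOf n' k x with hgdef
    obtain ⟨hg0, hgx⟩ := hordmem x
    have hmul : ∀ q, x * K ^ (g * q) = x := by
      intro q
      induction q with
      | zero => simp
      | succ q ih => rw [Nat.mul_succ, pow_add, ← mul_assoc, ih, hgx]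
    have hmod : x * K ^ (b % g) = x := by
      calc x * K ^ (b % g) = x * K ^ (g * (b / g)) * K ^ (b % g) := by rw [hmul]
        _ = x * K ^ (g * (b / g) + b % g) := by rw [pow_add, mul_assoc]
        _ = x * K ^ b := by rw [Nat.div_add_mod]
        _ = x := hb
    by_contra hnd
    have hr : b % g ≠ 0 := fun h => hnd (Nat.dvd_of_mod_eq_zero h)
    have hle : g ≤ b % g := Nat.sInf_le ⟨Nat.pos_of_ne_zero hr, hmod⟩
    exact absurd hle (not_le.mpr (Nat.mod_lt b hg0))
  -- k ≥ 2
  have hk2 : 2 ≤ k := by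
    by_contra h
    have hk1 : k = 1 := by omega
    have : g₁ ≤ 1 := by
      rw [hg₁]
      exact Nat.sInf_le ⟨one_pos, by simp [hK, hk1]⟩
    omega
  set D := g₁.divisors.filter (fun b => 3 ≤ b) with hD
  set F : ℕ → Finset (ZMod n') := fun b => Finset.univ.filter (fun x => x * K ^ (g₁ / b) = x)
    with hF
  have hsub : {x : ZMod n' | ordOf n' k x < g₁}.toFinset ⊆ D.biUnion F := by
    intro x hx
    rw [Set.mem_toFinset, Set.mem_setOf_eq] at hx
    obtain ⟨hg0, hgx⟩ := hordmem x
    set g := ordOf n' k x with hgdef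
    have hgdvd : g ∣ g₁ := hdvd x g₁ (by rw [hKg₁, mul_one])
    set b := g₁ / g with hb
    have hbg : b * g = g₁ := Nat.div_mul_cancel hgdvd
    have hbdvd : b ∣ g₁ := ⟨g, hbg.symm⟩
    have hb2 : 2 ≤ b := by
      rcases Nat.lt_or_ge b 2 with h | h
      · interval_cases b <;> omega
      · exact h
    have hb3 : 3 ≤ b := by
      by_contra h
      have hb2' : b = 2 := by omega
      have hgg : g = g₁ / 2 := by rw [hb2'] at hbg; omega
      have hxx : x * K ^ (g₁ / 2) = x := by rw [← hgg]; exact hgx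
      rw [hkneg] at hxx
      have h2x : (2 : ℕ) • x = 0 := by
        rw [two_nsmul]
        linear_combination -hxx
      have hdvd2 : addOrderOf x ∣ 2 := addOrderOf_dvd_iff_nsmul_eq_zero.mpr h2x
      have hdvdn : addOrderOf x ∣ n' := by
        have := addOrderOf_dvd_card (x := x)
        rwa [ZMod.card] at this
      have hgcd : addOrderOf x ∣ Nat.gcd 2 n' := Nat.dvd_gcd hdvd2 hdvdn
      have hk1dvd : Nat.gcd 2 n' ∣ k - 1 := by
        rcases (Nat.dvd_prime Nat.prime_two).mp (Nat.gcd_dvd_left 2 n') with h1 | h2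
        · rw [h1]; exact one_dvd _
        · rw [h2]
          have h2n : 2 ∣ n' := h2 ▸ Nat.gcd_dvd_right 2 n'
          have hko : ¬ (2 ∣ k) := by
            intro hkk
            have : (2 : ℕ) ∣ 1 := hcop ▸ Nat.dvd_gcd hkk h2n
            omega
          omega
      have hxk : x * K = x := by
        have hsm : (k - 1) • x = 0 :=
          addOrderOf_dvd_iff_nsmul_eq_zero.mp (dvd_trans hgcd hk1dvd)
        have hcast : ((k - 1 : ℕ) : ZMod n') = K - 1 := by
          rw [Nat.cast_sub hk, Nat.cast_one]
        rw [nsmul_eq_mul, hcast] at hsm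
        linear_combination hsm
      have hle1 : g ≤ 1 := Nat.sInf_le ⟨one_pos, by rw [pow_one]; exact hxk⟩
      omega
    refine Finset.mem_biUnion.mpr ⟨b, ?_, ?_⟩
    · rw [hD, Finset.mem_filter, Nat.mem_divisors]
      exact ⟨⟨hbdvd, hg₁pos.ne'⟩, hb3⟩
    · rw [hF, Finset.mem_filter]
      refine ⟨Finset.mem_univ x, ?_⟩
      have : g₁ / b = g := by rw [hb, Nat.div_div_self hgdvd hg₁pos.ne']
      rw [this]; exact hgx
  have hcount : ∀ b ∈ D, (F b).card ≤ Nat.gcd (k ^ (g₁ / b) - 1) n' := by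
    intro b hb
    rw [hD, Finset.mem_filter, Nat.mem_divisors] at hb
    obtain ⟨⟨hbdvd, _⟩, hb3⟩ := hb
    set d := g₁ / b with hd
    have hd0 : 0 < d := Nat.div_pos (Nat.le_of_dvd hg₁pos hbdvd) (by omega)
    have hkd2 : 2 ≤ k ^ d := le_trans hk2 (Nat.le_self_pow hd0.ne' k)
    set c := k ^ d - 1 with hc
    have hcpos : 0 < c := by omega
    set gc := Nat.gcd c n' with hgc
    have hgcpos : 0 < gc := Nat.gcd_pos_of_pos_right c hn'
    have hcdvd : gc ∣ c := Nat.gcd_dvd_left c n'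
    have hcast : ((c : ℕ) : ZMod n') = K ^ d - 1 := by
      rw [hc, Nat.cast_sub (by omega), Nat.cast_pow, Nat.cast_one]
    have hiff : ∀ x : ZMod n', x * K ^ d = x ↔ gc • x = 0 := by
      intro x
      constructor
      · intro hxx
        have hcx : c • x = 0 := by
          rw [nsmul_eq_mul, hcast]
          linear_combination hxx
        have h1 : addOrderOf x ∣ c := addOrderOf_dvd_iff_nsmul_eq_zero.mpr hcx
        have h2 : addOrderOf x ∣ n' := by
          have := addOrderOf_dvd_card (x := x)
          rwa [ZMod.card] at this
        exact addOrderOf_dvd_iff_nsmul_eq_zero.mp (Nat.dvd_gcd h1 h2)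
      · intro hxx
        have h1 : addOrderOf x ∣ gc := addOrderOf_dvd_iff_nsmul_eq_zero.mpr hxx
        have hcx : c • x = 0 := addOrderOf_dvd_iff_nsmul_eq_zero.mp (dvd_trans h1 hcdvd)
        rw [nsmul_eq_mul, hcast] at hcx
        linear_combination hcx
    calc (F b).card ≤ ({a : ZMod n' | gc • a = 0} : Finset (ZMod n')).card := by
          apply Finset.card_le_card
          intro x hx
          rw [hF, Finset.mem_filter] at hx
          simp only [Finset.mem_filter, Finset.mem_univ, true_and, Set.mem_setOf_eq]
          exact (hiff x).mp hx.2
      _ ≤ gc := IsAddCyclic.card_nsmul_eq_zero_le hgcpos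
  calc {x : ZMod n' | ordOf n' k x < g₁}.ncard
      = {x : ZMod n' | ordOf n' k x < g₁}.toFinset.card := Set.ncard_eq_toFinset_card' _
    _ ≤ (D.biUnion F).card := Finset.card_le_card hsub
    _ ≤ ∑ b ∈ D, (F b).card := Finset.card_biUnion_le
    _ ≤ ∑ b ∈ D, Nat.gcd (k ^ (g₁ / b) - 1) n' := Finset.sum_le_sum hcount
    _ ≤ 1 + ∑ b ∈ D, Nat.gcd (k ^ (g₁ / b) - 1) n' := Nat.le_add_left _ _
end

section
/- Let b and c be positive integers and let k ≥ 2 be an integer. Then each of the four quantities gcd(k^b + 1, k^c + 1), gcd(k^b + 1, k^c − 1), gcd(k^b − 1, k^c + 1), and gcd(k^b − 1, k^c − 1) is at most k^{gcd(b,c)} + 1. -/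
lemma key (k b c d : ℕ) (hk : 2 ≤ k) (hb : 0 < b) (hc : 0 < c) (hd : 0 < d)
    (εb εc : ℤ) (hεb : εb = 1 ∨ εb = -1) (hεc : εc = 1 ∨ εc = -1)
    (h1 : (d:ℤ) ∣ (k:ℤ)^b + εb) (h2 : (d:ℤ) ∣ (k:ℤ)^c + εc) :
    d ≤ k ^ Nat.gcd b c + 1 := by
  haveI : NeZero d := ⟨hd.ne'⟩
  have hb1 : ((k:ZMod d))^b = -(εb : ZMod d) := by
    have := (ZMod.intCast_zmod_eq_zero_iff_dvd _ d).mpr h1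
    push_cast at this
    linear_combination this
  have hc1 : ((k:ZMod d))^c = -(εc : ZMod d) := by
    have := (ZMod.intCast_zmod_eq_zero_iff_dvd _ d).mpr h2
    push_cast at this
    linear_combination this
  have hunit : IsUnit ((k:ZMod d)) := by
    have hu : IsUnit (((k:ZMod d))^b) := by
      rw [hb1]
      rcases hεb with h | h <;> simp [h]
    exact (isUnit_pow_iff hb.ne').mp hu
  obtain ⟨u, hu⟩ := hunit
  have hub : u ^ b = 1 ∨ u ^ b = -1 := by
    rcases hεb with h | h
    · right; ext; rw [Units.val_pow_eq_pow_val, hu, hb1, h]; simp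
    · left; ext; rw [Units.val_pow_eq_pow_val, hu, hb1, h]; simp
  have huc : u ^ c = 1 ∨ u ^ c = -1 := by
    rcases hεc with h | h
    · right; ext; rw [Units.val_pow_eq_pow_val, hu, hc1, h]; simp
    · left; ext; rw [Units.val_pow_eq_pow_val, hu, hc1, h]; simp
  set g := Nat.gcd b c with hg
  have hbez : (g : ℤ) = b * Nat.gcdA b c + c * Nat.gcdB b c := Nat.gcd_eq_gcd_ab b c
  have hzg : u ^ (g:ℤ) = (u ^ b) ^ (Nat.gcdA b c) * (u ^ c) ^ (Nat.gcdB b c) := by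
    rw [hbez, zpow_add, zpow_mul, zpow_mul, zpow_natCast, zpow_natCast]
  have hpm : ∀ v : (ZMod d)ˣ, v = 1 ∨ v = -1 → ∀ m : ℤ, v ^ m = 1 ∨ v ^ m = -1 := by
    rintro v (rfl | rfl) m
    · left; simp
    · rcases Int.even_or_odd m with h | ⟨n, rfl⟩
      · left; exact h.neg_one_zpow
      · right
        rw [zpow_add, zpow_mul, zpow_two, zpow_one, neg_mul_neg, one_mul, one_zpow, one_mul]
  have hug : u ^ g = 1 ∨ u ^ g = -1 := by
    have hz := hzg
    rw [zpow_natCast] at hz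
    rcases hpm _ hub (Nat.gcdA b c) with h1' | h1' <;>
      rcases hpm _ huc (Nat.gcdB b c) with h2' | h2' <;>
      rw [h1', h2'] at hz <;> simp at hz <;> tauto
  have hkg : ((k:ZMod d))^g = 1 ∨ ((k:ZMod d))^g = -1 := by
    rcases hug with h | h
    · left; rw [← hu, ← Units.val_pow_eq_pow_val, h]; rfl
    · right; rw [← hu, ← Units.val_pow_eq_pow_val, h]; simp
  have hgpos : 0 < g := Nat.gcd_pos_of_pos_left c hb
  have hkg2 : 2 ≤ k ^ g := by
    calc 2 = 2 ^ 1 := rfl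
    _ ≤ 2 ^ g := Nat.pow_le_pow_right (by omega) hgpos
    _ ≤ k ^ g := Nat.pow_le_pow_left hk g
  rcases hkg with h | h
  · have hdvd : (d:ℤ) ∣ (k:ℤ)^g - 1 := by
      rw [← ZMod.intCast_zmod_eq_zero_iff_dvd]
      push_cast
      rw [h]; ring
    have hdn : d ∣ k ^ g - 1 := by
      refine Int.natCast_dvd_natCast.mp ?_
      rwa [Nat.cast_sub (by omega), Nat.cast_pow, Nat.cast_one]
    have := Nat.le_of_dvd (by omega) hdn
    omega
  · have hdvd : (d:ℤ) ∣ (k:ℤ)^g + 1 := by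
      rw [← ZMod.intCast_zmod_eq_zero_iff_dvd]
      push_cast
      rw [h]; ring
    have hdn : d ∣ k ^ g + 1 := by
      refine Int.natCast_dvd_natCast.mp ?_
      rwa [Nat.cast_add, Nat.cast_pow, Nat.cast_one]
    exact Nat.le_of_dvd (by omega) hdn

/-- For positive integers `b, c` and an integer `k ≥ 2`, each of the four quantities
`gcd(k^b ± 1, k^c ± 1)` is at most `k^{gcd(b,c)} + 1`. -/
theorem stmt12 (b c k : ℕ) (hb : 0 < b) (hc : 0 < c) (hk : 2 ≤ k) :
    Nat.gcd (k ^ b + 1) (k ^ c + 1) ≤ k ^ Nat.gcd b c + 1 ∧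
    Nat.gcd (k ^ b + 1) (k ^ c - 1) ≤ k ^ Nat.gcd b c + 1 ∧
    Nat.gcd (k ^ b - 1) (k ^ c + 1) ≤ k ^ Nat.gcd b c + 1 ∧
    Nat.gcd (k ^ b - 1) (k ^ c - 1) ≤ k ^ Nat.gcd b c + 1 := by
  have hkb : 1 ≤ k ^ b := Nat.one_le_pow _ _ (by omega)
  have hkc : 1 ≤ k ^ c := Nat.one_le_pow _ _ (by omega)
  have castp : ∀ n : ℕ, 1 ≤ k ^ n → ((k ^ n - 1 : ℕ) : ℤ) = (k:ℤ)^n + (-1) := by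
    intro n hn
    rw [Nat.cast_sub hn, Nat.cast_pow, Nat.cast_one]
    ring
  have castq : ∀ n : ℕ, ((k ^ n + 1 : ℕ) : ℤ) = (k:ℤ)^n + 1 := by
    intro n; push_cast; ring
  refine ⟨?_, ?_, ?_, ?_⟩
  · refine key k b c _ hk hb hc (Nat.gcd_pos_of_pos_left _ (by omega)) 1 1 (Or.inl rfl) (Or.inl rfl) ?_ ?_
    · rw [← castq]; exact_mod_cast Int.natCast_dvd_natCast.mpr (Nat.gcd_dvd_left _ _)
    · rw [← castq]; exact_mod_cast Int.natCast_dvd_natCast.mpr (Nat.gcd_dvd_right _ _)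
  · refine key k b c _ hk hb hc (Nat.gcd_pos_of_pos_left _ (by omega)) 1 (-1) (Or.inl rfl) (Or.inr rfl) ?_ ?_
    · rw [← castq]; exact_mod_cast Int.natCast_dvd_natCast.mpr (Nat.gcd_dvd_left _ _)
    · rw [← castp c hkc]; exact_mod_cast Int.natCast_dvd_natCast.mpr (Nat.gcd_dvd_right _ _)
  · refine key k b c _ hk hb hc (Nat.gcd_pos_of_pos_right _ (by omega)) (-1) 1 (Or.inr rfl) (Or.inl rfl) ?_ ?_
    · rw [← castp b hkb]; exact_mod_cast Int.natCast_dvd_natCast.mpr (Nat.gcd_dvd_left _ _)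
    · rw [← castq]; exact_mod_cast Int.natCast_dvd_natCast.mpr (Nat.gcd_dvd_right _ _)
  · rcases Nat.eq_or_lt_of_le hkb with heq | hlt
    ·
      exfalso
      have : 2 ≤ k ^ b := by
        calc 2 = 2 ^ 1 := rfl
        _ ≤ 2 ^ b := Nat.pow_le_pow_right (by omega) hb
        _ ≤ k ^ b := Nat.pow_le_pow_left hk b
      omega
    · refine key k b c _ hk hb hc ?_ (-1) (-1) (Or.inr rfl) (Or.inr rfl) ?_ ?_
      · exact Nat.gcd_pos_of_pos_left _ (by omega)
      · rw [← castp b hkb]; exact_mod_cast Int.natCast_dvd_natCast.mpr (Nat.gcd_dvd_left _ _)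
      · rw [← castp c hkc]; exact_mod_cast Int.natCast_dvd_natCast.mpr (Nat.gcd_dvd_right _ _)
end

section
/- Let E_1 and E_2 be i.i.d. exponential random variables with mean one, and set K̄(x) = P(E_1 E_2 > x). Then for every x ≥ 0, K̄(x) = ∫_0^∞ exp(−y) exp(−x/y) dy, and K̄(x) is asymptotically equivalent to π^{1/2} x^{1/4} exp(−2 x^{1/2}) as x → ∞, i.e. K̄(x) / (π^{1/2} x^{1/4} e^{−2√x}) → 1 as x → ∞. -/
/-!
Conditioning on `E₁ = y` gives `K̄(x) = E[exp(-x / E₁)]`, which is the integral formula.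
For the asymptotics write `x = c⁴` and substitute `y = c(v + c)`: since
`y + c⁴/y = 2c² + c v²/(v + c)`, we get `K̄(c⁴) = c e^{-2c²} ∫_{v > -c} e^{-c v²/(v + c)} dv`.
As `c → ∞` the integrand tends to `e^{-v²}`, and for `c ≥ 1` it is dominated by `e^{1-|v|}`,
so the integral tends to `√π`.
-/

open MeasureTheory ProbabilityTheory Filter

/-- The tail probability `K̄(x) = P(E₁E₂ > x)` of the product of two independent
mean-one exponential random variables. -/
noncomputable def Kbar (x : ℝ) : ℝ :=
  (((expMeasure 1).prod (expMeasure 1)) {p : ℝ × ℝ | x < p.1 * p.2}).toReal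

open Real Set Topology

lemma measureReal_prod_apply {α β : Type*} [MeasurableSpace α] [MeasurableSpace β]
    {μ : Measure α} {ν : Measure β} [IsFiniteMeasure ν] {s : Set (α × β)} (hs : MeasurableSet s) :
    (μ.prod ν).real s = ∫ a, ν.real (Prod.mk a ⁻¹' s) ∂μ := by
  simp_rw [measureReal_def, Measure.prod_apply hs]
  exact (integral_toReal (measurable_measure_prodMk_left hs).aemeasurable
    (ae_of_all _ fun _ => measure_lt_top _ _)).symm

lemma expMeasure_real_Ioi {r t : ℝ} (hr : 0 < r) (ht : 0 ≤ t) :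
    (expMeasure r).real (Ioi t) = exp (-(r * t)) := by
  have := isProbabilityMeasure_expMeasure hr
  rw [← compl_Iic, probReal_compl_eq_one_sub measurableSet_Iic, ← cdf_eq_real,
    cdf_expMeasure_eq hr, if_pos ht, sub_sub_cancel]

lemma integral_expMeasure {r : ℝ} (hr : 0 < r) (f : ℝ → ℝ) :
    ∫ y, f y ∂expMeasure r = ∫ y in Ioi 0, r * exp (-(r * y)) * f y := by
  have hpdf : ∀ y, (exponentialPDF r y).toReal * f y
      = (Ici 0).indicator (fun y => r * exp (-(r * y)) * f y) y := by
    intro y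
    rw [exponentialPDF_eq, ENNReal.toReal_ofReal (by positivity)]
    by_cases hy : 0 ≤ y <;> simp [hy]
  rw [← integral_Ici_eq_integral_Ioi, ← integral_indicator measurableSet_Ici, ← funext hpdf]
  exact integral_withDensity_eq_integral_toReal_smul (by fun_prop)
    (ae_of_all _ fun _ => ENNReal.ofReal_lt_top) f

lemma integrable_exp_neg_abs : Integrable fun v : ℝ => exp (-|v|) := by
  refine (integrable_inv_one_add_sq.const_mul 2).mono' (by fun_prop) (ae_of_all _ fun v => ?_)
  have h := quadratic_le_exp_of_nonneg (abs_nonneg v)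
  rw [sq_abs] at h
  rw [norm_of_nonneg (exp_pos _).le, exp_neg, ← div_eq_mul_inv, le_div_iff₀ (by positivity),
    inv_mul_le_iff₀ (exp_pos _)]
  linarith [abs_nonneg v]

lemma integral_Ioi_zero_eq_mul_integral_comp_mul_add {c : ℝ} (hc : 0 < c) (a : ℝ) (g : ℝ → ℝ) :
    ∫ y in Ioi 0, g y = c * ∫ v in Ioi (-a), g (c * (v + a)) := by
  have himage : (fun v => c * (v + a)) '' Ioi (-a) = Ioi 0 := by
    rw [← image_image (c * ·) (· + a), image_add_const_Ioi, image_mul_left_Ioi hc]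
    simp
  rw [← himage,
    integral_image_eq_integral_abs_deriv_smul (f' := fun _ => c * 1) measurableSet_Ioi
    (fun v _ => (((hasDerivAt_id' v).add_const a).const_mul c).hasDerivWithinAt)
    (fun v _ w _ h => by simpa [hc.ne'] using h)]
  simp [abs_of_pos hc, integral_const_mul]

lemma abs_sub_one_le_mul_sq_div {c v : ℝ} (hc : 1 ≤ c) (hv : 0 < v + c) :
    |v| - 1 ≤ c * v ^ 2 / (v + c) := by
  rw [le_div_iff₀ hv]
  rcases abs_cases v with ⟨h, -⟩ | ⟨h, -⟩ <;> rw [h] <;>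
    nlinarith [sq_nonneg (2 * v + 1), sq_nonneg (2 * v - 1)]

lemma tendsto_mul_sq_div_add (v : ℝ) :
    Tendsto (fun c => c * v ^ 2 / (v + c)) atTop (𝓝 (v ^ 2)) := by
  have h : Tendsto (fun c => v ^ 2 - v ^ 3 / (v + c)) atTop (𝓝 (v ^ 2)) := by
    simpa using tendsto_const_nhds.sub
      (tendsto_const_nhds.div_atTop (tendsto_atTop_add_const_left _ v tendsto_id))
  refine h.congr' ?_
  filter_upwards [eventually_gt_atTop (-v)] with c hc
  have : v + c ≠ 0 := by linarith
  field_simp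
  ring

lemma Kbar_eq_integral {x : ℝ} (hx : 0 ≤ x) :
    Kbar x = ∫ y in Ioi 0, exp (-y) * exp (-x / y) := by
  have := isProbabilityMeasure_expMeasure one_pos
  have hS : MeasurableSet {p : ℝ × ℝ | x < p.1 * p.2} :=
    measurableSet_lt (by fun_prop) (by fun_prop)
  rw [Kbar, ← measureReal_def, measureReal_prod_apply hS, integral_expMeasure one_pos]
  refine setIntegral_congr_fun measurableSet_Ioi fun y (hy : 0 < y) => ?_
  have hslice : Prod.mk y ⁻¹' {p : ℝ × ℝ | x < p.1 * p.2} = Ioi (x / y) := by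
    ext z
    simp [div_lt_iff₀ hy, mul_comm]
  rw [hslice, expMeasure_real_Ioi one_pos (div_nonneg hx hy.le)]
  simp [neg_div]

noncomputable def laplaceIntegral (c : ℝ) : ℝ :=
  ∫ v in Ioi (-c), exp (-(c * v ^ 2 / (v + c)))

lemma tendsto_laplaceIntegral : Tendsto laplaceIntegral atTop (𝓝 (√π)) := by
  have hgauss : ∫ v, exp (-v ^ 2) = √π := by simpa using integral_gaussian 1
  rw [← hgauss]
  unfold laplaceIntegral
  simp_rw [← integral_indicator measurableSet_Ioi]
  refine tendsto_integral_filter_of_dominated_convergence (fun v => exp 1 * exp (-|v|))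
    (Eventually.of_forall fun c =>
      (by fun_prop : Measurable _).aestronglyMeasurable.indicator measurableSet_Ioi) ?_
    (integrable_exp_neg_abs.const_mul _) (ae_of_all _ fun v => ?_)
  · filter_upwards [eventually_ge_atTop 1] with c hc
    refine ae_of_all _ fun v => ?_
    rw [← exp_add, norm_indicator_eq_indicator_norm]
    refine indicator_le' (g := fun v => exp (1 + -|v|)) (fun v hv => ?_)
      (fun _ _ => by positivity) v
    rw [norm_of_nonneg (exp_pos _).le, exp_le_exp]
    linarith [abs_sub_one_le_mul_sq_div hc (by linarith [mem_Ioi.1 hv] : 0 < v + c)]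
  · have hlim := ((tendsto_mul_sq_div_add v).neg).rexp
    refine hlim.congr' ?_
    filter_upwards [eventually_gt_atTop (-v)] with c hc
    rw [indicator_of_mem (mem_Ioi.2 (by linarith))]

lemma Kbar_pow_four {c : ℝ} (hc : 0 < c) :
    Kbar (c ^ 4) = c * exp (-2 * c ^ 2) * laplaceIntegral c := by
  rw [Kbar_eq_integral (by positivity), integral_Ioi_zero_eq_mul_integral_comp_mul_add hc c,
    laplaceIntegral, mul_assoc, ← integral_const_mul (exp (-2 * c ^ 2))]
  congr 1
  refine setIntegral_congr_fun measurableSet_Ioi fun v (hv : -c < v) => ?_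
  have hvc : v + c ≠ 0 := by linarith
  rw [← exp_add, ← exp_add]
  congr 1
  field_simp
  ring

/-- `K̄(x) = ∫_0^∞ e^{−y} e^{−x/y} dy` for `x ≥ 0`, and
`K̄(x) ~ π^{1/2} x^{1/4} e^{−2√x}` as `x → ∞`. -/
theorem stmt17 :
    (∀ x : ℝ, 0 ≤ x → Kbar x = ∫ y in Set.Ioi (0 : ℝ), Real.exp (-y) * Real.exp (-x / y)) ∧
      Tendsto (fun x : ℝ =>
          Kbar x / (Real.sqrt Real.pi * x ^ ((1 : ℝ) / 4) * Real.exp (-2 * Real.sqrt x)))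
        atTop (nhds 1) := by
  refine ⟨fun x hx => Kbar_eq_integral hx, ?_⟩
  have hlim := (tendsto_laplaceIntegral.comp
    (tendsto_rpow_atTop (by norm_num : (0 : ℝ) < 1 / 4))).div_const √π
  rw [div_self (sqrt_pos.2 pi_pos).ne'] at hlim
  refine hlim.congr' ?_
  filter_upwards [eventually_gt_atTop 0] with x hx
  set c := x ^ ((1 : ℝ) / 4)
  have hc : 0 < c := rpow_pos_of_pos hx _
  have hx4 : x = c ^ 4 := by rw [← rpow_natCast, ← rpow_mul hx.le]; norm_num
  have hsqrt : √x = c ^ 2 := by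
    rw [hx4, show c ^ 4 = (c ^ 2) ^ 2 by ring, sqrt_sq (by positivity)]
  change laplaceIntegral c / √π = Kbar x / (√π * c * exp (-2 * √x))
  rw [hsqrt, hx4, Kbar_pow_four hc]
  field_simp
end
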